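/- arXiv:1704.06530 — 8 statements merged into one kernel-verified Lean document; each statement's English description precedes it below -/
import Mathlib

section
/- The projection onto an elementary block of any path in an asynchronous Boolean network is a hyper-path in the block: if x₁ → ⋯ → x_k is a path in the BN's asynchronous transition system, then π_B(x₁) ⇢ ⋯ ⇢ π_B(x_k) is a hyper-path in the transition system of block B. -/
open Classical

/-- Asynchronous transition of a Boolean network `f`: exactly one node `i` is
updated to `f i x`, all other nodes keep their value. -/
def Step {V : Type*} (f : V → (V → Bool) → Bool) (x y : V → Bool) : Prop :=
  ∃ i, y i = f i x ∧ ∀ j, j ≠ i → y j = x j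

/-- `g` depends only on the coordinates in `B`. -/
def DependsOnlyOn {V : Type*} (g : (V → Bool) → Bool) (B : Set V) : Prop :=
  ∀ x y : V → Bool, (∀ v ∈ B, x v = y v) → g x = g y

/-- An elementary block: a set of nodes that is parent-closed, i.e. the update
function of every node of `B` depends only on nodes of `B`. -/
def Elementary {V : Type*} (f : V → (V → Bool) → Bool) (B : Set V) : Prop :=
  ∀ i ∈ B, DependsOnlyOn (f i) B

/-- Canonical representatives of block states: full states that are `false`
outside the block. -/
def ProjStates {V : Type*} (B : Set V) : Set (V → Bool) :=
  {x | ∀ v ∉ B, x v = false}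

/-- Projection of a full state onto a block `B` (canonical representative). -/
noncomputable def proj {V : Type*} (B : Set V) (x : V → Bool) : V → Bool :=
  fun v => if v ∈ B then x v else false

/-- Asynchronous transition of the block `B` (on canonical block states):
exactly one node `i ∈ B` is updated according to its Boolean function. -/
def BStep {V : Type*} (f : V → (V → Bool) → Bool) (B : Set V) (x y : V → Bool) : Prop :=
  x ∈ ProjStates B ∧ y ∈ ProjStates B ∧
    ∃ i ∈ B, y i = f i x ∧ ∀ j, j ≠ i → y j = x j

/-- An attractor of a transition relation `R`: a nonempty set of mutually
reachable states from which no outside state is reachable. -/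
def IsAttractor {α : Type*} (R : α → α → Prop) (A : Set α) : Prop :=
  A.Nonempty ∧ (∀ x ∈ A, ∀ y ∈ A, Relation.ReflTransGen R x y) ∧
    ∀ x ∈ A, ∀ y, Relation.ReflTransGen R x y → y ∈ A

/-- An attractor of the block `B` of the Boolean network `f`. -/
def IsBlockAttr {V : Type*} (f : V → (V → Bool) → Bool) (B : Set V)
    (A : Set (V → Bool)) : Prop :=
  A ⊆ ProjStates B ∧ IsAttractor (BStep f B) A

/-- The projection onto an elementary block of any path of the asynchronous
Boolean network is a hyper-path in the block's transition system. -/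
theorem path_projects_to_hyperpath {V : Type*} [Fintype V]
    (f : V → (V → Bool) → Bool) (B : Set V) (hB : Elementary f B)
    (k : ℕ) (x : ℕ → (V → Bool)) (hpath : ∀ l, l + 1 < k → Step f (x l) (x (l + 1))) :
    ∀ l, l + 1 < k →
      BStep f B (proj B (x l)) (proj B (x (l + 1))) ∨
        proj B (x l) = proj B (x (l + 1)) := by
  intro l hl
  obtain ⟨i, hi, hfix⟩ := hpath l hl
  by_cases hiB : i ∈ B
  · by_cases hchg : x (l + 1) i = x l i
    · right
      funext v
      simp only [proj]
      split
      · rename_i hv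
        by_cases hvi : v = i
        · subst hvi; exact hchg.symm
        · exact (hfix v hvi).symm
      · rfl
    · left
      refine ⟨fun v hv => by simp [proj, hv], fun v hv => by simp [proj, hv], i, hiB, ?_, ?_⟩
      · have : f i (proj B (x l)) = f i (x l) := by
          apply hB i hiB
          intro v hv
          simp [proj, hv]
        rw [this]
        simp [proj, hiB, hi]
      · intro j hj
        simp only [proj]
        split
        · exact hfix j hj
        · rfl
  · right
    funext v
    simp only [proj]
    split
    · rename_i hv
      exact (hfix v (fun h => hiB (h ▸ hv))).symm
    · rfl
end

section
/- Every elementary block of an asynchronous Boolean network preserves its attractors: if A is an attractor of the Boolean network G and B is an elementary block of G, then there exists an attractor A^B of the block B (viewed as a Boolean network) such that π_B(A) ⊆ A^B. -/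
open Classical

lemma proj_mem_ProjStates {V : Type*} (B : Set V) (x : V → Bool) :
    proj B x ∈ ProjStates B := fun v hv => by simp [proj, hv]

lemma proj_agree {V : Type*} (B : Set V) (x : V → Bool) :
    ∀ v ∈ B, x v = proj B x v := fun v hv => by simp [proj, hv]

lemma step_to_bstep {V : Type*} (f : V → (V → Bool) → Bool) (B : Set V)
    (hB : Elementary f B) {x y : V → Bool} (h : Step f x y) :
    Relation.ReflTransGen (BStep f B) (proj B x) (proj B y) := by
  obtain ⟨i, hi, hrest⟩ := h
  by_cases hiB : i ∈ B
  · refine Relation.ReflTransGen.single ?_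
    refine ⟨proj_mem_ProjStates B x, proj_mem_ProjStates B y, i, hiB, ?_, ?_⟩
    · have : f i x = f i (proj B x) := hB i hiB x (proj B x) (proj_agree B x)
      simp [proj, hiB, hi, this]
    · intro j hj
      by_cases hjB : j ∈ B <;> simp [proj, hjB, hrest j hj]
  · have : proj B x = proj B y := by
      funext v
      by_cases hvB : v ∈ B
      · have hvi : v ≠ i := fun h => hiB (h ▸ hvB)
        simp [proj, hvB, hrest v hvi]
      · simp [proj, hvB]
    rw [this]

lemma rtg_step_to_bstep {V : Type*} (f : V → (V → Bool) → Bool) (B : Set V)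
    (hB : Elementary f B) {x y : V → Bool} (h : Relation.ReflTransGen (Step f) x y) :
    Relation.ReflTransGen (BStep f B) (proj B x) (proj B y) := by
  induction h with
  | refl => exact Relation.ReflTransGen.refl
  | tail _ hstep ih => exact ih.trans (step_to_bstep f B hB hstep)

lemma bstep_back {V : Type*} (f : V → (V → Bool) → Bool) (B : Set V)
    (hB : Elementary f B) {x w : V → Bool} (h : BStep f B (proj B x) w) :
    ∃ y, Step f x y ∧ proj B y = w := by
  obtain ⟨-, hw, i, hiB, hwi, hrest⟩ := h
  refine ⟨fun v => if v = i then f i x else x v, ⟨i, by simp, fun j hj => by simp [hj]⟩, ?_⟩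
  funext v
  by_cases hvB : v ∈ B
  · by_cases hvi : v = i
    · subst hvi
      have : f v x = f v (proj B x) := hB v hvB x (proj B x) (proj_agree B x)
      simp [proj, hvB, hwi, this]
    · simp [proj, hvB, hvi, hrest v hvi]
  · have hvi : v ≠ i := fun h => hvB (h ▸ hiB)
    simp [proj, hvB, hvi, hw v hvB]

/-- Every elementary block preserves the attractors of the Boolean network:
for every attractor `A` of `G` there is an attractor `AB` of the block `B`
containing the projection of `A`. -/
theorem elementary_block_preserves_attractors {V : Type*} [Fintype V]
    (f : V → (V → Bool) → Bool) (B : Set V) (hB : Elementary f B)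
    (A : Set (V → Bool)) (hA : IsAttractor (Step f) A) :
    ∃ AB : Set (V → Bool), IsBlockAttr f B AB ∧ proj B '' A ⊆ AB := by
  obtain ⟨hne, hconn, hclosed⟩ := hA
  refine ⟨proj B '' A, ⟨?_, ?_, ?_, ?_⟩, le_refl _⟩
  · rintro _ ⟨x, -, rfl⟩; exact proj_mem_ProjStates B x
  · obtain ⟨x, hx⟩ := hne; exact ⟨proj B x, x, hx, rfl⟩
  · rintro _ ⟨x, hx, rfl⟩ _ ⟨y, hy, rfl⟩
    exact rtg_step_to_bstep f B hB (hconn x hx y hy)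
  · rintro _ ⟨x, hx, rfl⟩ w hw
    induction hw with
    | refl => exact ⟨x, hx, rfl⟩
    | tail _ hstep ih =>
      obtain ⟨y, hy, rfl⟩ := ih
      obtain ⟨y', hstep', rfl⟩ := bstep_back f B hB hstep
      exact ⟨y', hclosed y hy y' (Relation.ReflTransGen.single hstep'), rfl⟩
end

section
/- Projection of an attractor of an asynchronous Boolean network onto an elementary block is either a single state (a fixed point of the block restricted to the attractor, when the attractor path never updates block nodes) or the full vertex set of a closed path in the block's transition system; in either case π_B(A) is contained in a strongly connected subset of the block's transition system. -/
open Classical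

/-!
A network step changing a node outside `B` leaves the projection unchanged, and one changing a
node of `B` projects to a block step, because block nodes only read block values. Conversely, a
block step from `proj B x` lifts to a network step from `x`. Hence `proj B '' A` is itself an
attractor of the block's transition system. A finite attractor is the vertex set of a closed walk,
obtained by chaining round trips from a base point to each of its states; that walk has length
zero exactly when the projection is a single state.
-/

section Walks

variable {α : Type*} {R : α → α → Prop}

/-- Only `p 0, …, p m` matter: the walk has length `m`. -/
def IsWalk (R : α → α → Prop) (p : ℕ → α) (m : ℕ) : Prop :=
  ∀ l < m, R (p l) (p (l + 1))

theorem IsWalk.cons {a : α} {p : ℕ → α} {m : ℕ} (ha : R a (p 0)) (hp : IsWalk R p m) :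
    IsWalk R (fun | 0 => a | l + 1 => p l) (m + 1)
  | 0, _ => ha
  | l + 1, hl => hp l (by omega)

theorem IsWalk.exists_prepend {a : α} {p : ℕ → α} {m : ℕ}
    (hap : Relation.ReflTransGen R a (p 0)) (hp : IsWalk R p m) :
    ∃ n q, q 0 = a ∧ q n = p m ∧ IsWalk R q n ∧
      {s | ∃ l ≤ m, p l = s} ⊆ {s | ∃ l ≤ n, q l = s} := by
  induction hap using Relation.ReflTransGen.head_induction_on with
  | refl => exact ⟨m, p, rfl, rfl, hp, subset_rfl⟩
  | head hac _ ih =>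
    obtain ⟨n, q, rfl, hqn, hq, hsub⟩ := ih
    refine ⟨n + 1, _, rfl, hqn, hq.cons hac, hsub.trans ?_⟩
    rintro _ ⟨l, hl, rfl⟩
    exact ⟨l + 1, by omega, rfl⟩

theorem exists_closed_walk_covering {A : Set α} (hfin : A.Finite)
    (hconn : ∀ x ∈ A, ∀ y ∈ A, Relation.ReflTransGen R x y) {u : α} (hu : u ∈ A) :
    ∃ m p, p 0 = u ∧ p m = u ∧ IsWalk R p m ∧ A ⊆ {s | ∃ l ≤ m, p l = s} := by
  refine Set.Finite.induction_on_subset (motive := fun S _ =>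
    ∃ m p, p 0 = u ∧ p m = u ∧ IsWalk R p m ∧ S ⊆ {s | ∃ l ≤ m, p l = s}) A hfin
    ⟨0, fun _ => u, rfl, rfl, fun _ h => absurd h (Nat.not_lt_zero _), Set.empty_subset _⟩ ?_
  rintro a S ha - - ⟨m, p, hp0, hpm, hp, hS⟩
  -- go from `u` to `a`, back to `u`, then around the closed walk covering `S`
  obtain ⟨n, q, hq0, hqn, hq, hpq⟩ := hp.exists_prepend (hp0 ▸ hconn a ha u hu)
  obtain ⟨k, r, hr0, hrk, hr, hqr⟩ := hq.exists_prepend (hq0 ▸ hconn u hu a ha)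
  exact ⟨k, r, hr0, hrk.trans (hqn.trans hpm), hr,
    Set.insert_subset (hqr ⟨0, Nat.zero_le _, hq0⟩) ((hS.trans hpq).trans hqr)⟩

theorem IsAttractor.walk_mem {A : Set α} (hA : IsAttractor R A) {p : ℕ → α} {m : ℕ}
    (hp0 : p 0 ∈ A) (hp : IsWalk R p m) : ∀ l ≤ m, p l ∈ A
  | 0, _ => hp0
  | l + 1, hl => hA.2.2 _ (hA.walk_mem hp0 hp l (by omega)) _ (.single (hp l (by omega)))

theorem IsAttractor.exists_closed_walk {A : Set α} (hA : IsAttractor R A) (hfin : A.Finite) :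
    ∃ m p, p 0 = p m ∧ IsWalk R p m ∧ A = {s | ∃ l ≤ m, p l = s} := by
  obtain ⟨u, hu⟩ := hA.1
  obtain ⟨m, p, hp0, hpm, hp, hcover⟩ := exists_closed_walk_covering hfin hA.2.1 hu
  refine ⟨m, p, hp0.trans hpm.symm, hp, hcover.antisymm ?_⟩
  rintro _ ⟨l, hl, rfl⟩
  exact hA.walk_mem (hp0 ▸ hu) hp l hl

end Walks

section Projection

variable {V : Type*} {f : V → (V → Bool) → Bool} {B : Set V}

theorem proj_mem_projStates (B : Set V) (x : V → Bool) : proj B x ∈ ProjStates B :=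
  fun _ hv => if_neg hv

theorem Elementary.apply_proj (hB : Elementary f B) {i : V} (hi : i ∈ B) (x : V → Bool) :
    f i (proj B x) = f i x :=
  hB i hi _ _ fun _ hv => if_pos hv

theorem Step.proj_eq_or_bStep (hB : Elementary f B) {x y : V → Bool} (h : Step f x y) :
    proj B y = proj B x ∨ BStep f B (proj B x) (proj B y) := by
  obtain ⟨i, hyi, hy⟩ := h
  by_cases hi : i ∈ B
  · refine .inr ⟨proj_mem_projStates B x, proj_mem_projStates B y, i, hi, ?_, fun j hj => ?_⟩
    · simp [proj, hi, hyi, hB.apply_proj hi]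
    · simp [proj, hy j hj]
  · left
    funext v
    by_cases hv : v ∈ B
    · simp [proj, hv, hy v (ne_of_mem_of_not_mem hv hi)]
    · simp [proj, hv]

theorem reflTransGen_bStep_proj (hB : Elementary f B) {x y : V → Bool}
    (h : Relation.ReflTransGen (Step f) x y) :
    Relation.ReflTransGen (BStep f B) (proj B x) (proj B y) := by
  induction h with
  | refl => rfl
  | tail _ hstep ih =>
    rcases hstep.proj_eq_or_bStep hB with heq | hb
    · rwa [heq]
    · exact ih.tail hb

theorem BStep.exists_step_of_proj (hB : Elementary f B) {x z : V → Bool}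
    (h : BStep f B (proj B x) z) : ∃ y, Step f x y ∧ proj B y = z := by
  obtain ⟨-, hz, i, hi, hzi, hzj⟩ := h
  refine ⟨Function.update x i (f i x),
    ⟨i, Function.update_self .., fun j hj => Function.update_of_ne hj _ _⟩, ?_⟩
  funext v
  by_cases hv : v ∈ B
  · rcases eq_or_ne v i with rfl | hvi
    · simp [proj, hv, hzi, hB.apply_proj hv]
    · simp [proj, hv, hvi, hzj v hvi]
  · simp [proj, hv, hz v hv]

theorem IsAttractor.isBlockAttr_proj_image (hB : Elementary f B) {A : Set (V → Bool)}
    (hA : IsAttractor (Step f) A) : IsBlockAttr f B (proj B '' A) := by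
  refine ⟨Set.image_subset_iff.2 fun x _ => proj_mem_projStates B x, hA.1.image _, ?_, ?_⟩
  · rintro _ ⟨x, hx, rfl⟩ _ ⟨y, hy, rfl⟩
    exact reflTransGen_bStep_proj hB (hA.2.1 x hx y hy)
  · rintro _ ⟨x, hx, rfl⟩ z hz
    induction hz with
    | refl => exact ⟨x, hx, rfl⟩
    | tail _ hstep ih =>
      obtain ⟨x', hx', rfl⟩ := ih
      obtain ⟨y, hxy, rfl⟩ := hstep.exists_step_of_proj hB
      exact ⟨y, hA.2.2 x' hx' y (.single hxy), rfl⟩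

end Projection

/-- The projection of an attractor of the network onto an elementary block is
either a single state or the full vertex set of a closed path of the block's
transition system; in either case it is contained in a strongly connected
subset of the block's transition system. -/
theorem attractor_projection_structure {V : Type*} [Fintype V]
    (f : V → (V → Bool) → Bool) (B : Set V) (hB : Elementary f B)
    (A : Set (V → Bool)) (hA : IsAttractor (Step f) A) :
    ((∃ s : V → Bool, proj B '' A = {s}) ∨
      (∃ k : ℕ, 1 ≤ k ∧ ∃ y : ℕ → (V → Bool), y 0 = y k ∧
        (∀ l, l < k → BStep f B (y l) (y (l + 1))) ∧
        proj B '' A = {s | ∃ l ≤ k, y l = s})) ∧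
      ∃ C : Set (V → Bool), proj B '' A ⊆ C ∧
        ∀ u ∈ C, ∀ v ∈ C, Relation.ReflTransGen (BStep f B) u v := by
  have hproj := (hA.isBlockAttr_proj_image hB).2
  obtain ⟨k, y, hclosed, hwalk, hsupp⟩ := hproj.exists_closed_walk (Set.toFinite _)
  refine ⟨?_, _, subset_rfl, hproj.2.1⟩
  rcases Nat.eq_zero_or_pos k with rfl | hk
  · exact .inl ⟨y 0, hsupp.trans (by simp)⟩
  · exact .inr ⟨k, hk, y, hclosed, hwalk, hsupp⟩
end

section
/- Crossability of attractors between a block and its parent: let B_j be a single, elementary parent block of a non-elementary block B_i, let A^{B_j} be an attractor of B_j and A^{B_i} an attractor of the realisation of B_i with respect to A^{B_j}. Then A^{B_i} and A^{B_j} are crossable: every state of A^{B_i} agrees with some state of A^{B_j} on the shared control nodes, and vice versa. -/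
open Classical

/-- Transition of the realisation of a block `B` (with control nodes `B ∩ P`)
with respect to an attractor `Ap` of its single elementary parent block `P`:
either a non-control node of `B` is updated by its Boolean function, or the
control nodes are updated by mimicking a transition inside `Ap`. -/
def RStep {V : Type*} (f : V → (V → Bool) → Bool) (P B : Set V)
    (Ap : Set (V → Bool)) (x y : V → Bool) : Prop :=
  x ∈ ProjStates B ∧ y ∈ ProjStates B ∧
    ((∃ i ∈ B, i ∉ P ∧ y i = f i x ∧ ∀ j, j ≠ i → y j = x j) ∨
      (∃ p ∈ Ap, ∃ q ∈ Ap, BStep f P p q ∧ (∀ v ∈ B ∩ P, x v = p v) ∧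
        (∀ v ∈ B ∩ P, y v = q v) ∧ ∀ v, v ∉ P → y v = x v))

/-- An attractor of the realisation of block `B` with respect to the attractor
`Ap` of its parent block `P`: an attractor of the realisation's transition
system, whose state space consists of block states of `B` crossable with states
of `Ap`. -/
def IsRealAttr {V : Type*} (f : V → (V → Bool) → Bool) (P B : Set V)
    (Ap : Set (V → Bool)) (C : Set (V → Bool)) : Prop :=
  C ⊆ ProjStates B ∧ (∀ x ∈ C, ∃ p ∈ Ap, ∀ v ∈ B ∩ P, x v = p v) ∧
    IsAttractor (RStep f P B Ap) C

/-- Crossability of attractors between a non-elementary block `B` and its single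
elementary parent block `P`: if `Ap` is an attractor of `P` and `C` is an
attractor of the realisation of `B` with respect to `Ap`, then `C` and `Ap` are
crossable: every state of `C` agrees with some state of `Ap` on the shared
control nodes `B ∩ P`, and vice versa. -/
theorem realisation_attractor_crossable {V : Type*} [Fintype V]
    (f : V → (V → Bool) → Bool) (P B : Set V)
    (hP : Elementary f P) (hB : ∀ i ∈ B, i ∉ P → DependsOnlyOn (f i) B)
    (Ap C : Set (V → Bool)) (hAp : IsBlockAttr f P Ap)
    (hC : IsRealAttr f P B Ap C) :
    (∀ x ∈ C, ∃ p ∈ Ap, ∀ v ∈ B ∩ P, x v = p v) ∧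
      (∀ p ∈ Ap, ∃ x ∈ C, ∀ v ∈ B ∩ P, x v = p v) := by
  obtain ⟨hCsub, hCcross, hCne, hCconn, hCclosed⟩ := hC
  obtain ⟨hApsub, hApne, hApconn, hApclosed⟩ := hAp
  refine ⟨hCcross, ?_⟩
  obtain ⟨x0, hx0⟩ := hCne
  obtain ⟨p0, hp0, hagree0⟩ := hCcross x0 hx0
  have key : ∀ p, Relation.ReflTransGen (BStep f P) p0 p →
      ∃ x ∈ C, ∀ v ∈ B ∩ P, x v = p v := by
    intro p hreach
    induction hreach with
    | refl => exact ⟨x0, hx0, hagree0⟩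
    | @tail b c h step ih =>
      obtain ⟨x, hxC, hxb⟩ := ih
      have hbA : b ∈ Ap := hApclosed p0 hp0 b h
      have hcA : c ∈ Ap := hApclosed p0 hp0 c (h.tail step)
      set y : V → Bool := fun v => if v ∈ B then (if v ∈ P then c v else x v) else false
        with hy
      have hxP : x ∈ ProjStates B := hCsub hxC
      have hyP : y ∈ ProjStates B := fun v hv => by simp [hy, hv]
      have hstep : RStep f P B Ap x y := by
        refine ⟨hxP, hyP, Or.inr ⟨b, hbA, c, hcA, step, hxb, ?_, ?_⟩⟩
        · intro v hv; simp [hy, hv.1, hv.2]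
        · intro v hv
          by_cases hvB : v ∈ B
          · simp [hy, hvB, hv]
          · simp [hy, hvB, hxP v hvB]
      have hyC : y ∈ C := hCclosed x hxC y (Relation.ReflTransGen.single hstep)
      exact ⟨y, hyC, fun v hv => by simp [hy, hv.1, hv.2]⟩
  exact fun p hp => key p (hApconn p0 hp0 p hp)
end

section
/- Associativity/order-independence of attractor merging: if B_i, B_j, B_k are three pairwise-disjoint elementary blocks, or B_i is an elementary block that is the only parent block of both B_j and B_k, then Π(Π(𝒜^{B_i}, 𝒜^{B_j}), 𝒜^{B_k}) = Π(Π(𝒜^{B_i}, 𝒜^{B_k}), 𝒜^{B_j}), where 𝒜^{B} denotes the attractor set of block B and Π the cross operation on sets of attractors. -/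
open Classical

/-- Two block states (of blocks `B₁`, `B₂`) are crossable if they agree on the
shared nodes. -/
def StateCrossable {V : Type*} (B₁ B₂ : Set V) (x y : V → Bool) : Prop :=
  ∀ v ∈ B₁ ∩ B₂, x v = y v

/-- The cross (glue) of two crossable block states. -/
noncomputable def crossState {V : Type*} (B₁ B₂ : Set V) (x y : V → Bool) : V → Bool :=
  fun v => if v ∈ B₁ then x v else if v ∈ B₂ then y v else false

/-- Two sets of block states are crossable if every state of either set is
crossable with some state of the other. -/
def SetCrossable {V : Type*} (B₁ B₂ : Set V) (A₁ A₂ : Set (V → Bool)) : Prop :=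
  (∀ x ∈ A₁, ∃ y ∈ A₂, StateCrossable B₁ B₂ x y) ∧
    (∀ y ∈ A₂, ∃ x ∈ A₁, StateCrossable B₁ B₂ x y)

/-- The cross operation on two sets of block states. -/
def crossSet {V : Type*} (B₁ B₂ : Set V) (A₁ A₂ : Set (V → Bool)) :
    Set (V → Bool) :=
  {m | ∃ x ∈ A₁, ∃ y ∈ A₂, StateCrossable B₁ B₂ x y ∧ m = crossState B₁ B₂ x y}

/-- The cross operation on two families of attractors: cross all crossable
pairs. -/
def crossFam {V : Type*} (B₁ B₂ : Set V) (F₁ F₂ : Set (Set (V → Bool))) :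
    Set (Set (V → Bool)) :=
  {M | ∃ A₁ ∈ F₁, ∃ A₂ ∈ F₂, SetCrossable B₁ B₂ A₁ A₂ ∧ M = crossSet B₁ B₂ A₁ A₂}

lemma crossSet_swap_sub {V : Type*} (Bi Bj Bk : Set V) (A Cj Ck : Set (V → Bool)) :
    crossSet (Bi ∪ Bj) Bk (crossSet Bi Bj A Cj) Ck ⊆
      crossSet (Bi ∪ Bk) Bj (crossSet Bi Bk A Ck) Cj := by
  rintro m ⟨g, ⟨a, ha, cj, hcj, hac, rfl⟩, ck, hck, hgc, rfl⟩
  have hik : StateCrossable Bi Bk a ck := by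
    intro v hv
    have := hgc v ⟨Or.inl hv.1, hv.2⟩
    simpa [crossState, hv.1] using this
  have hjk' : ∀ v, v ∈ Bj → v ∈ Bk → v ∉ Bi → cj v = ck v := by
    intro v hj hk hi
    have := hgc v ⟨Or.inr hj, hk⟩
    simpa [crossState, hi, hj] using this
  refine ⟨crossState Bi Bk a ck, ⟨a, ha, ck, hck, hik, rfl⟩, cj, hcj, ?_, ?_⟩
  · intro v hv
    by_cases hvi : v ∈ Bi
    · simpa [crossState, hvi] using hac v ⟨hvi, hv.2⟩
    · have hvk : v ∈ Bk := hv.1.resolve_left hvi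
      simp [crossState, hvi, hvk, (hjk' v hv.2 hvk hvi).symm]
  · funext v
    by_cases hvi : v ∈ Bi
    · simp [crossState, hvi]
    · by_cases hvj : v ∈ Bj <;> by_cases hvk : v ∈ Bk
      · simp [crossState, hvi, hvj, hvk, hjk' v hvj hvk hvi]
      all_goals simp [crossState, hvi, hvj, hvk]

lemma crossFam_swap_sub {V : Type*} (Bi Bj Bk : Set V)
    (hjk : Bj ∩ Bk ⊆ Bi) (Ai Aj Ak : Set (Set (V → Bool))) :
    crossFam (Bi ∪ Bj) Bk (crossFam Bi Bj Ai Aj) Ak ⊆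
      crossFam (Bi ∪ Bk) Bj (crossFam Bi Bk Ai Ak) Aj := by
  rintro M ⟨G, ⟨A, hA, Cj, hCj, hXij, rfl⟩, Ck, hCk, hX, rfl⟩
  have h1 : SetCrossable Bi Bk A Ck := by
    constructor
    · intro a ha
      obtain ⟨cj, hcj, hac⟩ := hXij.1 a ha
      obtain ⟨ck, hck, hgc⟩ := hX.1 _ ⟨a, ha, cj, hcj, hac, rfl⟩
      exact ⟨ck, hck, fun v hv => by
        have := hgc v ⟨Or.inl hv.1, hv.2⟩; simpa [crossState, hv.1] using this⟩
    · intro ck hck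
      obtain ⟨g, hg, hgc⟩ := hX.2 ck hck
      obtain ⟨a, ha, cj, hcj, hac, rfl⟩ := hg
      exact ⟨a, ha, fun v hv => by
        have := hgc v ⟨Or.inl hv.1, hv.2⟩; simpa [crossState, hv.1] using this⟩
  have h2 : SetCrossable (Bi ∪ Bk) Bj (crossSet Bi Bk A Ck) Cj := by
    constructor
    · rintro g ⟨a, ha, ck, hck, hac, rfl⟩
      obtain ⟨cj, hcj, haj⟩ := hXij.1 a ha
      refine ⟨cj, hcj, fun v hv => ?_⟩
      have hvBi : v ∈ Bi := hv.1.elim id fun h => hjk ⟨hv.2, h⟩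
      simpa [crossState, hvBi] using haj v ⟨hvBi, hv.2⟩
    · intro cj hcj
      obtain ⟨a, ha, haj⟩ := hXij.2 cj hcj
      obtain ⟨ck, hck, hak⟩ := h1.1 a ha
      refine ⟨crossState Bi Bk a ck, ⟨a, ha, ck, hck, hak, rfl⟩, fun v hv => ?_⟩
      have hvBi : v ∈ Bi := hv.1.elim id fun h => hjk ⟨hv.2, h⟩
      simpa [crossState, hvBi] using haj v ⟨hvBi, hv.2⟩
  exact ⟨crossSet Bi Bk A Ck, ⟨A, hA, Ck, hCk, h1, rfl⟩, Cj, hCj, h2,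
    le_antisymm (crossSet_swap_sub Bi Bj Bk A Cj Ck)
      (crossSet_swap_sub Bi Bk Bj A Ck Cj)⟩

/-- Order-independence of attractor merging: if `Bi`, `Bj`, `Bk` are three
pairwise-disjoint elementary blocks (with their attractor families), or `Bi` is
an elementary block that is the only parent block of both `Bj` and `Bk` (whose
attractor families are taken over all realisations w.r.t. attractors of `Bi`),
then merging in either order yields the same attractor family. -/
theorem cross_order_independent {V : Type*} [Fintype V]
    (f : V → (V → Bool) → Bool) (Bi Bj Bk : Set V)
    (Ai Aj Ak : Set (Set (V → Bool)))
    (hcase :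
      (Elementary f Bi ∧ Elementary f Bj ∧ Elementary f Bk ∧
        Disjoint Bi Bj ∧ Disjoint Bi Bk ∧ Disjoint Bj Bk ∧
        Ai = {A : Set (V → Bool) | IsBlockAttr f Bi A} ∧
        Aj = {A : Set (V → Bool) | IsBlockAttr f Bj A} ∧
        Ak = {A : Set (V → Bool) | IsBlockAttr f Bk A}) ∨
      (Elementary f Bi ∧
        (∀ i ∈ Bj, i ∉ Bi → DependsOnlyOn (f i) Bj) ∧
        (∀ i ∈ Bk, i ∉ Bi → DependsOnlyOn (f i) Bk) ∧
        Bj ∩ Bk ⊆ Bi ∧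
        Ai = {A : Set (V → Bool) | IsBlockAttr f Bi A} ∧
        Aj = {C : Set (V → Bool) | ∃ A : Set (V → Bool),
          IsBlockAttr f Bi A ∧ IsRealAttr f Bi Bj A C} ∧
        Ak = {C : Set (V → Bool) | ∃ A : Set (V → Bool),
          IsBlockAttr f Bi A ∧ IsRealAttr f Bi Bk A C})) :
    crossFam (Bi ∪ Bj) Bk (crossFam Bi Bj Ai Aj) Ak =
      crossFam (Bi ∪ Bk) Bj (crossFam Bi Bk Ai Ak) Aj := by
  have hjk : Bj ∩ Bk ⊆ Bi := by
    rcases hcase with ⟨-, -, -, -, -, h, -⟩ | ⟨-, -, -, h, -⟩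
    · exact fun v hv => (Set.disjoint_iff.mp h hv).elim
    · exact h
  exact le_antisymm (crossFam_swap_sub _ _ _ hjk _ _ _)
    (crossFam_swap_sub _ _ _ (by rwa [Set.inter_comm]) _ _ _)
end

section
/- If a state x of the merged block B_{i,j} (with B_i an elementary single parent of B_j) satisfies π_{B_i}(x) ∈ A^{B_i} and π_{B_j}(x) ∈ A^{B_j} for crossable attractors A^{B_i}, A^{B_j}, then every one-step successor y of x in B_{i,j} also satisfies π_{B_i}(y) ∈ A^{B_i} and π_{B_j}(y) ∈ A^{B_j}; i.e., the glued set Π(A^{B_i}, A^{B_j}) is closed under transitions (an invariant set). -/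
open Classical

/-- Invariance of the glued set: if a state `x` of the merged block `P ∪ B`
projects into an attractor `Ap` of the elementary single parent block `P` and
into an attractor `C` of the realisation of `B` w.r.t. `Ap`, then every
one-step successor of `x` in the merged block does so as well. -/
theorem glued_set_invariant {V : Type*} [Fintype V]
    (f : V → (V → Bool) → Bool) (P B : Set V)
    (hP : Elementary f P) (hB : ∀ i ∈ B, i ∉ P → DependsOnlyOn (f i) B)
    (Ap C : Set (V → Bool)) (hAp : IsBlockAttr f P Ap)
    (hC : IsRealAttr f P B Ap C)
    (x : V → Bool) (hx : x ∈ ProjStates (P ∪ B))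
    (hxP : proj P x ∈ Ap) (hxB : proj B x ∈ C) :
    ∀ y : V → Bool, BStep f (P ∪ B) x y → proj P y ∈ Ap ∧ proj B y ∈ C := by
  rintro y ⟨hxS, hyS, i, hiPB, hyi, hrest⟩
  have hprojP : ∀ z : V → Bool, proj P z ∈ ProjStates P := by
    intro z v hv; simp [proj, hv]
  have hprojB : ∀ z : V → Bool, proj B z ∈ ProjStates B := by
    intro z v hv; simp [proj, hv]
  have hApClosed := hAp.2.2.2
  have hCClosed := hC.2.2.2.2
  by_cases hiP : i ∈ P
  · -- the parent block makes a step
    have hfi : f i (proj P x) = f i x := by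
      apply hP i hiP
      intro v hv; simp [proj, hv]
    have hstepP : BStep f P (proj P x) (proj P y) := by
      refine ⟨hprojP x, hprojP y, i, hiP, ?_, ?_⟩
      · simp [proj, hiP, hyi, hfi]
      · intro j hj
        by_cases hjP : j ∈ P
        · simp [proj, hjP, hrest j hj]
        · simp [proj, hjP]
    have hyAp : proj P y ∈ Ap :=
      hApClosed _ hxP _ (Relation.ReflTransGen.single hstepP)
    refine ⟨hyAp, ?_⟩
    by_cases hiB : i ∈ B
    · -- control node update: mimic the parent transition
      have hstep : RStep f P B Ap (proj B x) (proj B y) := by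
        refine ⟨hprojB x, hprojB y, Or.inr ⟨proj P x, hxP, proj P y, hyAp, hstepP, ?_, ?_, ?_⟩⟩
        · intro v hv; simp [proj, hv.1, hv.2]
        · intro v hv; simp [proj, hv.1, hv.2]
        · intro v hv
          by_cases hvB : v ∈ B
          · have : v ≠ i := fun h => hv (h ▸ hiP)
            simp [proj, hvB, hrest v this]
          · simp [proj, hvB]
      exact hCClosed _ hxB _ (Relation.ReflTransGen.single hstep)
    · -- i ∉ B : projection onto B unchanged
      have : proj B y = proj B x := by
        funext v
        by_cases hvB : v ∈ B
        · have : v ≠ i := fun h => hiB (h ▸ hvB)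
          simp [proj, hvB, hrest v this]
        · simp [proj, hvB]
      rw [this]; exact hxB
  · -- i ∉ P : hence i ∈ B, a non-control update
    have hiB : i ∈ B := hiPB.resolve_left hiP
    have hPx : proj P y = proj P x := by
      funext v
      by_cases hvP : v ∈ P
      · have : v ≠ i := fun h => hiP (h ▸ hvP)
        simp [proj, hvP, hrest v this]
      · simp [proj, hvP]
    refine ⟨hPx ▸ hxP, ?_⟩
    have hfi : f i (proj B x) = f i x := by
      apply hB i hiB hiP
      intro v hv; simp [proj, hv]
    have hstep : RStep f P B Ap (proj B x) (proj B y) := by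
      refine ⟨hprojB x, hprojB y, Or.inl ⟨i, hiB, hiP, ?_, ?_⟩⟩
      · simp [proj, hiB, hyi, hfi]
      · intro j hj
        by_cases hjB : j ∈ B
        · simp [proj, hjB, hrest j hj]
        · simp [proj, hjB]
    exact hCClosed _ hxB _ (Relation.ReflTransGen.single hstep)
end

section
/- The projection onto an elementary block B_i of any attractor A of the merged block B_{i,j} is an attractor of B_i, where B_i is an elementary block whose nodes' update functions do not depend on nodes of B_j. -/
open Classical

lemma f_proj_eq {V : Type*} {f : V → (V → Bool) → Bool} {B : Set V}
    (hB : Elementary f B) {i : V} (hi : i ∈ B) (x : V → Bool) :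
    f i (proj B x) = f i x := by
  apply hB i hi
  intro v hv
  simp [proj, hv]

lemma step_proj {V : Type*} {f : V → (V → Bool) → Bool} {B : Set V}
    (hB : Elementary f B) {a b : V → Bool} (h : Step f a b) :
    Relation.ReflTransGen (BStep f B) (proj B a) (proj B b) := by
  obtain ⟨i, hib, hoth⟩ := h
  by_cases hi : i ∈ B
  · apply Relation.ReflTransGen.single
    refine ⟨proj_mem_ProjStates B a, proj_mem_ProjStates B b, i, hi, ?_, ?_⟩
    · simp [proj, hi, hib, f_proj_eq hB hi]
    · intro j hj
      by_cases hjB : j ∈ B <;> simp [proj, hjB, hoth j hj]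
  · have : proj B b = proj B a := by
      funext v
      by_cases hvB : v ∈ B
      · have : v ≠ i := fun h => hi (h ▸ hvB)
        simp [proj, hvB, hoth v this]
      · simp [proj, hvB]
    rw [this]

/-- The projection onto an elementary block `B` of any attractor of the merged
network is an attractor of the block `B`. -/
theorem attractor_projection_is_block_attractor {V : Type*} [Fintype V]
    (f : V → (V → Bool) → Bool) (B : Set V) (hB : Elementary f B)
    (A : Set (V → Bool)) (hA : IsAttractor (Step f) A) :
    IsBlockAttr f B (proj B '' A) := by
  obtain ⟨hne, hmut, hcl⟩ := hA
  refine ⟨?_, ?_, ?_, ?_⟩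
  · rintro z ⟨x, _, rfl⟩
    exact proj_mem_ProjStates B x
  · obtain ⟨x, hx⟩ := hne
    exact ⟨proj B x, ⟨x, hx, rfl⟩⟩
  · rintro _ ⟨x, hx, rfl⟩ _ ⟨y, hy, rfl⟩
    have h := hmut x hx y hy
    clear hx hy
    induction h with
    | refl => exact Relation.ReflTransGen.refl
    | tail _ hstep ih => exact ih.trans (step_proj hB hstep)
  · rintro _ ⟨x, hx, rfl⟩ z hz
    suffices h : ∃ y ∈ A, proj B y = z by
      obtain ⟨y, hy, rfl⟩ := h; exact ⟨y, hy, rfl⟩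
    induction hz with
    | refl => exact ⟨x, hx, rfl⟩
    | tail _ hstep ih =>
      obtain ⟨y, hy, rfl⟩ := ih
      obtain ⟨_, hc, i, hi, hib, hoth⟩ := hstep
      rename_i c _
      refine ⟨Function.update y i (f i y), ?_, ?_⟩
      · exact hcl y hy _ (Relation.ReflTransGen.single
          ⟨i, by simp [Function.update], fun j hj => by simp [Function.update, hj]⟩)
      · funext v
        by_cases hvB : v ∈ B
        · by_cases hvi : v = i
          · subst hvi
            simp [proj, hvB, Function.update, hib, f_proj_eq hB hi]
          · simp [proj, hvB, Function.update, hvi, hoth v hvi]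
        · simp [proj, hvB, hc v hvB]
end

section
/- Control-node reachability within an attractor: let B_j be a block with control node set Z and remaining nodes V, where nodes of Z update independently of V. If A is an attractor of (a realisation of) B_j and x ∈ A, then for every z in the Z-projection of A, the state obtained from x by replacing its Z-coordinates with z also belongs to A. -/
open Classical

/-- Control-node reachability within a realisation attractor: if `x` belongs to
an attractor `C` of the realisation of block `B` (control nodes `Z = B ∩ P`)
w.r.t. a parent attractor `Ap`, and `z` is the control-node projection of some
state `y ∈ C`, then the state obtained from `x` by replacing its control-node
coordinates by those of `y` also belongs to `C`. -/
theorem control_replacement_mem_attractor {V : Type*} [Fintype V]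
    (f : V → (V → Bool) → Bool) (P B : Set V)
    (hP : Elementary f P) (hB : ∀ i ∈ B, i ∉ P → DependsOnlyOn (f i) B)
    (Ap C : Set (V → Bool)) (hAp : IsBlockAttr f P Ap)
    (hC : IsRealAttr f P B Ap C)
    (x y : V → Bool) (hx : x ∈ C) (hy : y ∈ C) :
    (fun v => if v ∈ B ∩ P then y v else x v) ∈ C := by
  obtain ⟨hCsub, hCproj, hCne, hCmut, hCclosed⟩ := hC
  obtain ⟨hApSub, hApNe, hApMut, hApClosed⟩ := hAp
  obtain ⟨p, hp, hxp⟩ := hCproj x hx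
  obtain ⟨q, hq, hyq⟩ := hCproj y hy
  have hxB : x ∈ ProjStates B := hCsub hx
  set mix : (V → Bool) → (V → Bool) :=
    fun r v => if v ∈ B ∩ P then r v else x v with hmix
  have hmixProj : ∀ r, mix r ∈ ProjStates B := by
    intro r v hv
    have h1 : v ∉ B ∩ P := fun h => hv h.1
    show (if v ∈ B ∩ P then r v else x v) = false
    rw [if_neg h1]; exact hxB v hv
  have hmixp : mix p = x := by
    funext v
    show (if v ∈ B ∩ P then p v else x v) = x v
    by_cases h : v ∈ B ∩ P
    · rw [if_pos h, (hxp v h).symm]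
    · rw [if_neg h]
  have hmixq : mix q = (fun v => if v ∈ B ∩ P then y v else x v) := by
    funext v
    show (if v ∈ B ∩ P then q v else x v) = if v ∈ B ∩ P then y v else x v
    by_cases h : v ∈ B ∩ P
    · rw [if_pos h, if_pos h, hyq v h]
    · rw [if_neg h, if_neg h]
  have hlift : ∀ r s : V → Bool, r ∈ Ap → s ∈ Ap → BStep f P r s →
      RStep f P B Ap (mix r) (mix s) := by
    intro r s hr hs hstep
    refine ⟨hmixProj r, hmixProj s, Or.inr ⟨r, hr, s, hs, hstep, ?_, ?_, ?_⟩⟩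
    · intro v hv; exact if_pos hv
    · intro v hv; exact if_pos hv
    · intro v hv
      have h1 : v ∉ B ∩ P := fun h => hv h.2
      show (if v ∈ B ∩ P then s v else x v) = if v ∈ B ∩ P then r v else x v
      rw [if_neg h1, if_neg h1]
  have hreach : Relation.ReflTransGen (BStep f P) p q := hApMut p hp q hq
  have hmain : ∀ r : V → Bool, Relation.ReflTransGen (BStep f P) p r →
      r ∈ Ap ∧ Relation.ReflTransGen (RStep f P B Ap) (mix p) (mix r) := by
    intro r h
    induction h with
    | refl => exact ⟨hp, Relation.ReflTransGen.refl⟩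
    | @tail b c _ h2 ih =>
        have hbAp := ih.1
        have hcAp : c ∈ Ap := hApClosed b hbAp c (Relation.ReflTransGen.single h2)
        exact ⟨hcAp, ih.2.tail (hlift b c hbAp hcAp h2)⟩
  have hfin := (hmain q hreach).2
  rw [hmixp, hmixq] at hfin
  exact hCclosed x hx _ hfin
end
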